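/- If a finite set of matrices {A₁,…,A_m} admits a common quadratic Lyapunov function, i.e., there is a symmetric positive definite P with A_iᵀPA_i − P negative definite for all i, then the joint spectral radius ρ(A₁,…,A_m) is strictly less than 1. -/

import Mathlib

open Matrix

/-- The entrywise ℓ¹ matrix norm (a submultiplicative matrix norm). -/
noncomputable def mnorm {n : ℕ} (A : Matrix (Fin n) (Fin n) ℝ) : ℝ :=
  ∑ i, ∑ j, |A i j|

/-- The product A_{w 0} * A_{w 1} * ⋯ * A_{w (k-1)} of matrices from the family `A`. -/
noncomputable def wordProd {n m : ℕ} (A : Fin m → Matrix (Fin n) (Fin n) ℝ)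
    {k : ℕ} (w : Fin k → Fin m) : Matrix (Fin n) (Fin n) ℝ :=
  (List.ofFn fun i => A (w i)).prod

/-- ρ_k(Σ): the maximum over length-k products of the k-th root of their norm. -/
noncomputable def rhoK {n m : ℕ} (A : Fin m → Matrix (Fin n) (Fin n) ℝ) (k : ℕ) : ℝ :=
  sSup {r : ℝ | ∃ w : Fin k → Fin m, r = mnorm (wordProd A w) ^ ((1 : ℝ) / k)}

/-- The joint spectral radius, realized as inf over k ≥ 1 of ρ_k (which equals
lim_{k→∞} ρ_k for submultiplicative norms). -/
noncomputable def jsr {n m : ℕ} (A : Fin m → Matrix (Fin n) (Fin n) ℝ) : ℝ :=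
  ⨅ k : ℕ, rhoK A (k + 1)

/-- A symmetric real matrix is positive definite: xᵀQx > 0 for all nonzero x. -/
def PosDefQuad {n : ℕ} (Q : Matrix (Fin n) (Fin n) ℝ) : Prop :=
  ∀ x : Fin n → ℝ, x ≠ 0 → 0 < x ⬝ᵥ Q.mulVec x

/-!
The Lyapunov form `q x = xᵀ P x` contracts under every `A i` by a common factor `c < 1`: the
ratio `q (A i x) / q x` is scale-invariant, hence attains its maximum on the compact unit sphere.
So `q (W x) ≤ c ^ k * q x` for every product `W` of length `k`. As `q` dominates a multiple of
the Euclidean norm squared, the entries of `W` decay geometrically; for large `k` every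
product of length `k` has norm `< 1`, and `ρ(Σ) ≤ ρ_k(Σ) < 1`.
-/

lemma mnorm_nonneg {n : ℕ} (A : Matrix (Fin n) (Fin n) ℝ) : 0 ≤ mnorm A := by
  unfold mnorm; positivity

lemma mnorm_le_of_forall_abs_le {n : ℕ} {A : Matrix (Fin n) (Fin n) ℝ} {δ : ℝ}
    (h : ∀ i j, |A i j| ≤ δ) : mnorm A ≤ n ^ 2 * δ := by
  calc mnorm A ≤ ∑ _i : Fin n, ∑ _j : Fin n, δ :=
        Finset.sum_le_sum fun i _ => Finset.sum_le_sum fun j _ => h i j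
    _ = n ^ 2 * δ := by
        simp only [Finset.sum_const, Finset.card_univ, Fintype.card_fin, nsmul_eq_mul]; ring

lemma sq_apply_le_dotProduct_self {ι : Type*} [Fintype ι] (v : ι → ℝ) (i : ι) :
    v i ^ 2 ≤ v ⬝ᵥ v := by
  simpa [dotProduct, sq] using
    Finset.single_le_sum (fun j _ => mul_self_nonneg (v j)) (Finset.mem_univ i)

section QuadraticForm

variable {n : ℕ}

lemma smul_dotProduct_mulVec_smul (Q : Matrix (Fin n) (Fin n) ℝ) (t : ℝ) (x : Fin n → ℝ) :
    (t • x) ⬝ᵥ Q *ᵥ (t • x) = t ^ 2 * (x ⬝ᵥ Q *ᵥ x) := by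
  simp only [mulVec_smul, smul_dotProduct, dotProduct_smul, smul_eq_mul]; ring

lemma dotProduct_transpose_mul_mul_mulVec (P A : Matrix (Fin n) (Fin n) ℝ) (x : Fin n → ℝ) :
    x ⬝ᵥ (Aᵀ * P * A) *ᵥ x = (A *ᵥ x) ⬝ᵥ P *ᵥ (A *ᵥ x) := by
  simp [← mulVec_mulVec, dotProduct_mulVec, vecMul_transpose]

lemma PosDefQuad.nonneg {Q : Matrix (Fin n) (Fin n) ℝ} (hQ : PosDefQuad Q) (x : Fin n → ℝ) :
    0 ≤ x ⬝ᵥ Q *ᵥ x := by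
  rcases eq_or_ne x 0 with rfl | hx
  · simp
  · exact (hQ x hx).le

lemma PosDefQuad.exists_le_mul_of_lt {Q R : Matrix (Fin n) (Fin n) ℝ} (hR : PosDefQuad R)
    (h : ∀ x, x ≠ 0 → x ⬝ᵥ Q *ᵥ x < x ⬝ᵥ R *ᵥ x) :
    ∃ c, 0 ≤ c ∧ c < 1 ∧ ∀ x, x ⬝ᵥ Q *ᵥ x ≤ c * (x ⬝ᵥ R *ᵥ x) := by
  rcases subsingleton_or_nontrivial (Fin n → ℝ) with hn | hn
  · exact ⟨0, le_rfl, one_pos, fun x => by simp [Subsingleton.elim x 0]⟩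
  have hsphere : ∀ x ∈ Metric.sphere (0 : Fin n → ℝ) 1, x ≠ 0 := fun x hx =>
    ne_zero_of_norm_ne_zero (by simp_all)
  have hcont : ContinuousOn (fun x => (x ⬝ᵥ Q *ᵥ x) / (x ⬝ᵥ R *ᵥ x))
      (Metric.sphere (0 : Fin n → ℝ) 1) :=
    (by fun_prop : Continuous fun x : Fin n → ℝ => x ⬝ᵥ Q *ᵥ x).continuousOn.div
      (by fun_prop : Continuous fun x : Fin n → ℝ => x ⬝ᵥ R *ᵥ x).continuousOn
      fun x hx => (hR x (hsphere x hx)).ne'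
  obtain ⟨u, hu, hmax⟩ := (isCompact_sphere (0 : Fin n → ℝ) 1).exists_isMaxOn
    (NormedSpace.sphere_nonempty.2 zero_le_one) hcont
  have hRu := hR u (hsphere u hu)
  refine ⟨max ((u ⬝ᵥ Q *ᵥ u) / (u ⬝ᵥ R *ᵥ u)) 0, le_max_right _ _,
    max_lt ((div_lt_one hRu).2 (h u (hsphere u hu))) one_pos, fun x => ?_⟩
  rcases eq_or_ne x 0 with rfl | hx
  · simp
  have hRx := hR x hx
  have hxn : ‖x‖⁻¹ ≠ 0 := inv_ne_zero (norm_ne_zero_iff.2 hx)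
  have hratio : (x ⬝ᵥ Q *ᵥ x) / (x ⬝ᵥ R *ᵥ x) ≤ (u ⬝ᵥ Q *ᵥ u) / (u ⬝ᵥ R *ᵥ u) := by
    have := isMaxOn_iff.1 hmax _ (show ‖x‖⁻¹ • x ∈ Metric.sphere (0 : Fin n → ℝ) 1 by
      simp [norm_smul, norm_ne_zero_iff.2 hx])
    simpa only [smul_dotProduct_mulVec_smul,
      mul_div_mul_left _ _ (pow_ne_zero 2 hxn)] using this
  calc x ⬝ᵥ Q *ᵥ x ≤ (u ⬝ᵥ Q *ᵥ u) / (u ⬝ᵥ R *ᵥ u) * (x ⬝ᵥ R *ᵥ x) := (div_le_iff₀ hRx).1 hratio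
    _ ≤ _ := mul_le_mul_of_nonneg_right (le_max_left _ _) hRx.le

/-- `Q ≤ c (Q + R)` with `c < 1` rearranges to `Q ≤ c / (1 - c) R`. -/
lemma PosDefQuad.exists_le_mul {Q R : Matrix (Fin n) (Fin n) ℝ} (hQ : ∀ x, 0 ≤ x ⬝ᵥ Q *ᵥ x)
    (hR : PosDefQuad R) : ∃ C, 0 ≤ C ∧ ∀ x, x ⬝ᵥ Q *ᵥ x ≤ C * (x ⬝ᵥ R *ᵥ x) := by
  have hQR : PosDefQuad (Q + R) := fun x hx => by
    rw [add_mulVec, dotProduct_add]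
    exact add_pos_of_nonneg_of_pos (hQ x) (hR x hx)
  obtain ⟨c, hc0, hc1, hc⟩ := hQR.exists_le_mul_of_lt (Q := Q) fun x hx => by
    rw [add_mulVec, dotProduct_add]
    linarith [hR x hx]
  refine ⟨c / (1 - c), div_nonneg hc0 (by linarith), fun x => ?_⟩
  have hcx := hc x
  rw [add_mulVec, dotProduct_add] at hcx
  rw [div_mul_eq_mul_div, le_div_iff₀ (by linarith)]
  linarith

lemma PosDefQuad.exists_uniform_contraction {ι : Type*} [Finite ι]
    {A : ι → Matrix (Fin n) (Fin n) ℝ} {P : Matrix (Fin n) (Fin n) ℝ} (hP : PosDefQuad P)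
    (hdec : ∀ i, PosDefQuad (P - (A i)ᵀ * P * A i)) :
    ∃ c, 0 ≤ c ∧ c < 1 ∧ ∀ i x, (A i *ᵥ x) ⬝ᵥ P *ᵥ (A i *ᵥ x) ≤ c * (x ⬝ᵥ P *ᵥ x) := by
  have hcontr : ∀ i, ∃ c : Set.Ico (0 : ℝ) 1,
      ∀ x, (A i *ᵥ x) ⬝ᵥ P *ᵥ (A i *ᵥ x) ≤ c * (x ⬝ᵥ P *ᵥ x) := fun i => by
    obtain ⟨c, hc0, hc1, hc⟩ := hP.exists_le_mul_of_lt (Q := (A i)ᵀ * P * A i) fun x hx => by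
      have := hdec i x hx
      rw [sub_mulVec, dotProduct_sub] at this
      linarith
    exact ⟨⟨c, hc0, hc1⟩, fun x => dotProduct_transpose_mul_mul_mulVec P (A i) x ▸ hc x⟩
  choose c hc using hcontr
  obtain ⟨C, hC⟩ := Finite.exists_le c
  exact ⟨C, C.2.1, C.2.2, fun i x =>
    (hc i x).trans (mul_le_mul_of_nonneg_right (hC i) (hP.nonneg x))⟩

end QuadraticForm

section Words

variable {n m : ℕ} (A : Fin m → Matrix (Fin n) (Fin n) ℝ)

lemma wordProd_succ {k : ℕ} (w : Fin (k + 1) → Fin m) :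
    wordProd A w = A (w 0) * wordProd A (fun i => w i.succ) := by
  simp [wordProd, List.ofFn_succ]

lemma wordProd_dotProduct_mulVec_le {P : Matrix (Fin n) (Fin n) ℝ} {c : ℝ} (hc : 0 ≤ c)
    (h : ∀ i x, (A i *ᵥ x) ⬝ᵥ P *ᵥ (A i *ᵥ x) ≤ c * (x ⬝ᵥ P *ᵥ x)) :
    ∀ {k : ℕ} (w : Fin k → Fin m) (x : Fin n → ℝ),
      (wordProd A w *ᵥ x) ⬝ᵥ P *ᵥ (wordProd A w *ᵥ x) ≤ c ^ k * (x ⬝ᵥ P *ᵥ x)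
  | 0, w, x => by simp [wordProd]
  | k + 1, w, x => by
    rw [wordProd_succ, ← mulVec_mulVec, pow_succ', mul_assoc]
    exact (h _ _).trans
      (mul_le_mul_of_nonneg_left (wordProd_dotProduct_mulVec_le hc h _ x) hc)

lemma rhoK_nonneg (k : ℕ) : 0 ≤ rhoK A k :=
  Real.sSup_nonneg (by rintro _ ⟨w, rfl⟩; exact Real.rpow_nonneg (mnorm_nonneg _) _)

lemma jsr_le_rhoK_succ (k : ℕ) : jsr A ≤ rhoK A (k + 1) :=
  ciInf_le ⟨0, by rintro _ ⟨k, rfl⟩; exact rhoK_nonneg A _⟩ k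

lemma rhoK_lt_one {k : ℕ} (hk : k ≠ 0) (h : ∀ w : Fin k → Fin m, mnorm (wordProd A w) < 1) :
    rhoK A k < 1 := by
  set S := {r : ℝ | ∃ w : Fin k → Fin m, r = mnorm (wordProd A w) ^ ((1 : ℝ) / k)}
  have hfin : S.Finite := (Set.finite_range fun w : Fin k → Fin m =>
    mnorm (wordProd A w) ^ ((1 : ℝ) / k)).subset (by rintro _ ⟨w, rfl⟩; exact ⟨w, rfl⟩)
  change sSup S < 1
  rcases S.eq_empty_or_nonempty with hS | hS
  · simp [hS]
  rw [hfin.csSup_lt_iff hS]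
  rintro _ ⟨w, rfl⟩
  exact Real.rpow_lt_one (mnorm_nonneg _) (h w) (by positivity)

end Words

open Filter in
lemma jsr_lt_one_of_sq_wordProd_apply_le {n m : ℕ} (A : Fin m → Matrix (Fin n) (Fin n) ℝ)
    (B : Fin n → ℝ) {c : ℝ} (hc0 : 0 ≤ c) (hc1 : c < 1)
    (h : ∀ (k : ℕ) (w : Fin k → Fin m) i j, wordProd A w i j ^ 2 ≤ B j * c ^ k) :
    jsr A < 1 := by
  set δ : ℝ := 1 / (n ^ 2 + 1)
  have hδ : 0 < δ := by positivity
  have hev : ∀ᶠ k in atTop, ∀ j, B j * c ^ k < δ ^ 2 := eventually_all.2 fun j => by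
    have := (tendsto_pow_atTop_nhds_zero_of_lt_one hc0 hc1).const_mul (B j)
    rw [mul_zero] at this
    exact this.eventually (gt_mem_nhds (by positivity))
  obtain ⟨N, hN⟩ := eventually_atTop.1 hev
  have hnorm : ∀ w : Fin (N + 1) → Fin m, mnorm (wordProd A w) < 1 := fun w => by
    have hentry : ∀ i j, |wordProd A w i j| ≤ δ := fun i j =>
      abs_le_of_sq_le_sq ((h _ w i j).trans (hN _ N.le_succ j).le) hδ.le
    calc mnorm (wordProd A w) ≤ n ^ 2 * δ := mnorm_le_of_forall_abs_le hentry
      _ < 1 := by rw [mul_one_div, div_lt_one (by positivity)]; linarith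
  exact (jsr_le_rhoK_succ A N).trans_lt (rhoK_lt_one A N.succ_ne_zero hnorm)

theorem stmt_7_general {n m : ℕ}
    (A : Fin m → Matrix (Fin n) (Fin n) ℝ)
    (P : Matrix (Fin n) (Fin n) ℝ) (hP : PosDefQuad P)
    (hdec : ∀ i, PosDefQuad (P - (A i)ᵀ * P * A i)) :
    jsr A < 1 := by
  obtain ⟨c, hc0, hc1, hcontr⟩ := hP.exists_uniform_contraction hdec
  obtain ⟨C, hC0, hC⟩ := hP.exists_le_mul (Q := 1) fun x => by
    rw [one_mulVec]
    exact Finset.sum_nonneg fun i _ => mul_self_nonneg (x i)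
  refine jsr_lt_one_of_sq_wordProd_apply_le A (fun j => C * P j j) hc0 hc1 fun k w i j => ?_
  set y := wordProd A w *ᵥ Pi.single j 1
  calc wordProd A w i j ^ 2 = y i ^ 2 := by simp [y]
    _ ≤ y ⬝ᵥ y := sq_apply_le_dotProduct_self y i
    _ ≤ C * (y ⬝ᵥ P *ᵥ y) := by simpa using hC y
    _ ≤ C * (c ^ k * P j j) := by
      gcongr
      simpa [y] using wordProd_dotProduct_mulVec_le A hc0 hcontr w (Pi.single j 1)
    _ = C * P j j * c ^ k := by ring

/-- A common quadratic Lyapunov function implies that the joint spectral radius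
is strictly less than one. -/
theorem stmt_7 {n m : ℕ} (hm : 0 < m)
    (A : Fin m → Matrix (Fin n) (Fin n) ℝ)
    (P : Matrix (Fin n) (Fin n) ℝ) (hsymm : P.IsSymm) (hP : PosDefQuad P)
    (hdec : ∀ i, PosDefQuad (P - (A i)ᵀ * P * A i)) :
    jsr A < 1 :=
  stmt_7_general A P hP hdec
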